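/- arXiv:1501.00771 — 4 statements merged into one kernel-verified Lean document; each statement's English description precedes it below -/
import Mathlib

section
/- Let X and Y be real random variables on a probability space (S, 𝒜, P) with −M ≤ X ≤ Y ≤ M almost surely. Then E[XY] = M² − M·E[Y] + M·E[X] − ∫_{-M}^{M} ∫_{-M}^{t_2} P(t_1 ≤ X and Y ≤ t_2) dt_1 dt_2. -/
/-!
Since `P(t₁ ≤ X, Y ≤ t₂) = E[1{t₁ ≤ X} 1{Y ≤ t₂}]`, Fubini turns the double integral into the
expectation of `∫∫ 1{t₁ ≤ X} 1{Y ≤ t₂}` over `-M ≤ t₁ ≤ t₂ ≤ M`. Because `X ≤ Y`, the constraint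
`t₁ ≤ t₂` is automatic on the support, so this is the area `(X + M)(M - Y)` of the rectangle
`[-M, X] × [Y, M]`; expanding `E[(X + M)(M - Y)]` gives the formula.
-/

open MeasureTheory Set

theorem intervalIntegral.integral_indicator_Ici {E : Type*} [NormedAddCommGroup E]
    [NormedSpace ℝ E] {μ : Measure ℝ} [NullSingletonClass μ] {f : ℝ → E} {a b c : ℝ}
    (h : c ∈ Icc a b) :
    ∫ t in a..b, (Ici c).indicator f t ∂μ = ∫ t in c..b, f t ∂μ := by
  have hset : (Ici c ∩ Ioc a b : Set ℝ) =ᵐ[μ] Ioc c b := by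
    have : (Ioi c ∩ Ioc a b : Set ℝ) = Ioc c b := by
      rw [inter_comm, Ioc_inter_Ioi, sup_eq_right.2 h.1]
    exact this ▸ Ioi_ae_eq_Ici.symm.inter (ae_eq_refl _)
  rw [integral_of_le (h.1.trans h.2), integral_of_le h.2,
    MeasureTheory.integral_indicator measurableSet_Ici,
    Measure.restrict_restrict measurableSet_Ici, setIntegral_congr_set hset]

section

variable {S : Type*} [MeasurableSpace S] {μ : Measure S} {X Y : S → ℝ} {a b : ℝ}

theorem intervalIntegral_measureReal_le_and_le_eq_integral_indicator [IsFiniteMeasure μ]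
    (hX : Measurable X) (hY : Measurable Y) (hXY : ∀ᵐ s ∂μ, a ≤ X s ∧ X s ≤ Y s) {t : ℝ}
    (ht : a ≤ t) :
    ∫ u in a..t, μ.real {s | u ≤ X s ∧ Y s ≤ t}
      = ∫ s, (Ici (Y s)).indicator (fun _ => X s - a) t ∂μ := by
  have hE : MeasurableSet {p : ℝ × S | p.1 ≤ X p.2 ∧ Y p.2 ≤ t} :=
    (measurableSet_le measurable_fst (hX.comp measurable_snd)).inter
      (measurableSet_le (hY.comp measurable_snd) measurable_const)
  have hsection (u : ℝ) : μ.real {s | u ≤ X s ∧ Y s ≤ t}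
      = ∫ s, {p : ℝ × S | p.1 ≤ X p.2 ∧ Y p.2 ≤ t}.indicator 1 (u, s) ∂μ :=
    (integral_indicator_one (measurable_prodMk_left hE)).symm
  have hint : Integrable (Function.uncurry fun u s =>
      {p : ℝ × S | p.1 ≤ X p.2 ∧ Y p.2 ≤ t}.indicator (1 : ℝ × S → ℝ) (u, s))
      ((volume.restrict (uIoc a t)).prod μ) := by
    rw [uIoc_of_le ht]
    exact (integrable_const 1).indicator hE
  simp_rw [hsection]
  rw [intervalIntegral_integral_swap hint]
  refine integral_congr_ae (hXY.mono fun s ⟨haX, hXY⟩ => ?_)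
  by_cases hYt : Y s ≤ t
  · have hslice (u : ℝ) : {p : ℝ × S | p.1 ≤ X p.2 ∧ Y p.2 ≤ t}.indicator 1 (u, s)
        = {u | u ≤ X s}.indicator (1 : ℝ → ℝ) u := by
      simp [indicator_apply, hYt]
    simp_rw [hslice]
    rw [intervalIntegral.integral_indicator ⟨haX, hXY.trans hYt⟩]
    simp [indicator_of_mem (mem_Ici.2 hYt)]
  · simp [hYt]

theorem intervalIntegral_intervalIntegral_measureReal_eq_integral_mul [IsFiniteMeasure μ]
    (hX : Measurable X) (hY : Measurable Y) (hbdd : ∀ᵐ s ∂μ, a ≤ X s ∧ X s ≤ Y s ∧ Y s ≤ b)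
    (hab : a ≤ b) :
    ∫ t in a..b, ∫ u in a..t, μ.real {s | u ≤ X s ∧ Y s ≤ t}
      = ∫ s, (X s - a) * (b - Y s) ∂μ := by
  have hinner : EqOn (fun t => ∫ u in a..t, μ.real {s | u ≤ X s ∧ Y s ≤ t})
      (fun t => ∫ s, (Ici (Y s)).indicator (fun _ => X s - a) t ∂μ) (uIcc a b) := fun t ht =>
    intervalIntegral_measureReal_le_and_le_eq_integral_indicator hX hY
      (hbdd.mono fun _ hs => ⟨hs.1, hs.2.1⟩) (uIcc_of_le hab ▸ ht).1
  have hXa : Integrable (fun s => X s - a) μ :=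
    .of_bound (hX.sub_const a).aestronglyMeasurable (b - a) (hbdd.mono fun s hs => by
      rw [Real.norm_eq_abs, abs_le]; constructor <;> linarith [hs.1, hs.2.1, hs.2.2])
  have hint : Integrable (Function.uncurry fun t s => (Ici (Y s)).indicator (fun _ => X s - a) t)
      ((volume.restrict (uIoc a b)).prod μ) := by
    rw [uIoc_of_le hab]
    refine (hXa.comp_snd _).mono ?_ (ae_of_all _ fun p =>
      norm_indicator_le_norm_self (fun _ => X p.2 - a) p.1)
    simp only [indicator_apply, mem_Ici]
    exact (Measurable.ite (measurableSet_le (hY.comp measurable_snd) measurable_fst)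
      ((hX.comp measurable_snd).sub_const a) measurable_const).aestronglyMeasurable
  rw [intervalIntegral.integral_congr hinner, intervalIntegral_integral_swap hint]
  refine integral_congr_ae (hbdd.mono fun s ⟨haX, hXY, hYb⟩ => ?_)
  dsimp only
  rw [intervalIntegral.integral_indicator_Ici ⟨haX.trans hXY, hYb⟩,
    intervalIntegral.integral_const, smul_eq_mul, mul_comm]

theorem integral_sub_mul_sub [IsProbabilityMeasure μ] (hX : Integrable X μ)
    (hY : Integrable Y μ) (hXY : Integrable (fun s => X s * Y s) μ) (a b : ℝ) :
    ∫ s, (X s - a) * (b - Y s) ∂μ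
      = b * ∫ s, X s ∂μ - ∫ s, X s * Y s ∂μ - a * b + a * ∫ s, Y s ∂μ := by
  have hbX := hX.const_mul b
  have haY := hY.const_mul a
  have h₁ : Integrable (fun s => b * X s - X s * Y s) μ := hbX.sub hXY
  have h₂ : Integrable (fun s => a * Y s - a * b) μ := haY.sub (integrable_const _)
  rw [integral_congr_ae (ae_of_all _ fun s =>
      show (X s - a) * (b - Y s) = (b * X s - X s * Y s) + (a * Y s - a * b) by ring),
    integral_add h₁ h₂, integral_sub hbX hXY, integral_sub haY (integrable_const _),
    integral_const_mul, integral_const_mul]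
  simp only [integral_const, probReal_univ, smul_eq_mul, one_mul]
  ring

end

theorem integral_mul_eq_double_integral_general
    {S : Type*} [MeasurableSpace S] (P : Measure S) [IsProbabilityMeasure P]
    (M : ℝ) (X Y : S → ℝ) (hX : Measurable X) (hY : Measurable Y)
    (hbdd : ∀ᵐ s ∂P, -M ≤ X s ∧ X s ≤ Y s ∧ Y s ≤ M) :
    ∫ s, X s * Y s ∂P
      = M ^ 2 - M * (∫ s, Y s ∂P) + M * (∫ s, X s ∂P)
        - ∫ t2 in (-M)..M, ∫ t1 in (-M)..t2, (P {s | t1 ≤ X s ∧ Y s ≤ t2}).toReal := by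
  obtain ⟨s₀, hs₀⟩ := hbdd.exists
  have hMM : -M ≤ M := hs₀.1.trans (hs₀.2.1.trans hs₀.2.2)
  have hbound : ∀ᵐ s ∂P, ‖X s‖ ≤ M ∧ ‖Y s‖ ≤ M := hbdd.mono fun _ ⟨h₁, h₂, h₃⟩ =>
    ⟨abs_le.2 ⟨h₁, h₂.trans h₃⟩, abs_le.2 ⟨h₁.trans h₂, h₃⟩⟩
  have hIX : Integrable X P := .of_bound hX.aestronglyMeasurable M (hbound.mono fun _ h => h.1)
  have hIY : Integrable Y P := .of_bound hY.aestronglyMeasurable M (hbound.mono fun _ h => h.2)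
  have hIXY : Integrable (fun s => X s * Y s) P :=
    hIY.bdd_mul hX.aestronglyMeasurable (hbound.mono fun _ h => h.1)
  have hdouble := intervalIntegral_intervalIntegral_measureReal_eq_integral_mul hX hY hbdd hMM
  simp only [measureReal_def] at hdouble
  rw [hdouble, integral_sub_mul_sub hIX hIY hIXY]
  ring

/-- If `−M ≤ X ≤ Y ≤ M` a.s. then
`E[XY] = M² − M·E[Y] + M·E[X] − ∫_{-M}^{M} ∫_{-M}^{t₂} P(t₁ ≤ X ∧ Y ≤ t₂) dt₁ dt₂`. -/
theorem integral_mul_eq_double_integral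
    {S : Type*} [MeasurableSpace S] (P : Measure S) [IsProbabilityMeasure P]
    (M : ℝ) (hM : 0 < M) (X Y : S → ℝ) (hX : Measurable X) (hY : Measurable Y)
    (hbdd : ∀ᵐ s ∂P, -M ≤ X s ∧ X s ≤ Y s ∧ Y s ≤ M) :
    ∫ s, X s * Y s ∂P
      = M ^ 2 - M * (∫ s, Y s ∂P) + M * (∫ s, X s ∂P)
        - ∫ t2 in (-M)..M, ∫ t1 in (-M)..t2, (P {s | t1 ≤ X s ∧ Y s ≤ t2}).toReal :=
  integral_mul_eq_double_integral_general P M X Y hX hY hbdd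
end

section
/- In the setting of a belief measure ν on Ω with Choquet representation P_ν on compact sets, and bounded random variables Y_1, ..., Y_n on Ω, define on the product (𝒦(Ω))^∞ with i.i.d. product measure P_ν^∞ the random variables Z_i(K_1 × K_2 × ...) = inf_{ω ∈ K_i} Y_i(ω). Then Z_1, ..., Z_n are independent under P_ν^∞, with P_ν^∞(Z_i ≥ t_i for all i) = ∏_i ν(Y_i ≥ t_i) for all t_1, ..., t_n ∈ ℝ. -/
/-!
By uniqueness of product measures, `P_ν^∞` is `Measure.infinitePi (fun _ ↦ P_ν)`. The
σ-algebra on `NonemptyCompacts Ω` is arbitrary, so the events `{Z_i ∈ B}` need not be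
measurable and are measured by the outer measure. The i.i.d. product still factorizes on finite
boxes with arbitrary sides: it is the pushforward of the binary product of the products over
the coordinates inside and outside the box, and both `Measure.prod` and the finite
`Measure.pi` are multiplicative on arbitrary rectangles. Independence of the `Z_i` is then
immediate, and since `Y_i` is bounded, `t ≤ Z_i ↔ K_i ⊆ {Y_i ≥ t}`, whose probability is
`ν {Y_i ≥ t}`.
-/

open MeasureTheory TopologicalSpace ProbabilityTheory Set

namespace MeasureTheory.Measure

section infinitePi

variable {ι : Type*} {X : ι → Type*} {mX : ∀ i, MeasurableSpace (X i)}
  (μ : (i : ι) → Measure (X i)) [∀ i, IsProbabilityMeasure (μ i)]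

theorem infinitePi_map_piEquivPiSubtypeProd_symm (p : ι → Prop) [DecidablePred p] :
    ((infinitePi fun i : Subtype p ↦ μ i).prod (infinitePi fun i : {i // ¬p i} ↦ μ i)).map
      (MeasurableEquiv.piEquivPiSubtypeProd X p).symm = infinitePi μ := by
  refine eq_infinitePi μ fun s t ht ↦ ?_
  have hbox : (MeasurableEquiv.piEquivPiSubtypeProd X p).symm ⁻¹' (s : Set ι).pi t =
      ((s.subtype p : Set (Subtype p)).pi fun i ↦ t i) ×ˢ
        ((s.subtype (¬p ·) : Set {i // ¬p i}).pi fun i ↦ t i) := by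
    ext ⟨f, g⟩
    simp only [mem_preimage, mem_pi, Finset.mem_coe, mem_prod, Finset.mem_subtype, Subtype.forall,
      MeasurableEquiv.piEquivPiSubtypeProd_symm_apply]
    refine ⟨fun h ↦ ⟨fun i hp hs ↦ by simpa [hp] using h i hs,
      fun i hp hs ↦ by simpa [hp] using h i hs⟩, fun h i hs ↦ ?_⟩
    split_ifs with hp
    exacts [h.1 i hp hs, h.2 i hp hs]
  rw [MeasurableEquiv.map_apply, hbox, prod_prod,
    infinitePi_pi (fun i : Subtype p ↦ μ i) fun i _ ↦ ht i,
    infinitePi_pi (fun i : {i // ¬p i} ↦ μ i) fun i _ ↦ ht i,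
    Finset.prod_subtype_eq_prod_filter (f := fun i ↦ μ i (t i)),
    Finset.prod_subtype_eq_prod_filter (f := fun i ↦ μ i (t i)),
    Finset.prod_filter_mul_prod_filter_not]

theorem infinitePi_pi_outer (s : Finset ι) (t : (i : ι) → Set (X i)) :
    infinitePi μ ((s : Set ι).pi t) = ∏ i ∈ s, μ i (t i) := by
  classical
  have hbox : (MeasurableEquiv.piEquivPiSubtypeProd X (· ∈ s)).symm ⁻¹' (s : Set ι).pi t =
      (univ.pi fun i : {i // i ∈ s} ↦ t i) ×ˢ univ := by
    ext ⟨f, g⟩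
    simp only [mem_preimage, mem_pi, Finset.mem_coe, mem_prod, mem_univ, and_true,
      MeasurableEquiv.piEquivPiSubtypeProd_symm_apply, forall_const, Subtype.forall]
    exact forall₂_congr fun i hi ↦ by rw [dif_pos hi]
  rw [← infinitePi_map_piEquivPiSubtypeProd_symm μ (· ∈ s), MeasurableEquiv.map_apply, hbox,
    prod_prod, measure_univ, mul_one, infinitePi_eq_pi, pi_pi,
    Finset.prod_coe_sort s fun i ↦ μ i (t i)]

theorem infinitePi_eval_preimage (i : ι) (u : Set (X i)) :
    infinitePi μ ((fun ω ↦ ω i) ⁻¹' u) = μ i u := by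
  classical
  simpa using infinitePi_pi_outer μ {i} (Function.update (fun _ ↦ univ) i u)

end infinitePi

theorem eq_infinitePi_of_fin_cylinder {X : Type*} [MeasurableSpace X]
    (μ : Measure X) [IsProbabilityMeasure μ] {P : Measure (ℕ → X)}
    (hP : ∀ (m : ℕ) (s : Fin m → Set X), (∀ i, MeasurableSet (s i)) →
      P {f | ∀ i : Fin m, f i ∈ s i} = ∏ i, μ (s i)) :
    P = infinitePi fun _ ↦ μ := by
  classical
  refine eq_infinitePi _ fun s t ht ↦ ?_
  obtain ⟨m, hsm⟩ := s.exists_nat_subset_range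
  set u : ℕ → Set X := fun k ↦ if k ∈ s then t k else univ
  have hcyl : (s : Set ℕ).pi t = {f | ∀ i : Fin m, f i ∈ u i} := by
    ext f
    simp only [mem_pi, Finset.mem_coe, mem_ofPred_eq, u]
    refine ⟨fun h i ↦ ?_, fun h k hk ↦ ?_⟩
    · split_ifs with hi
      exacts [h i hi, mem_univ _]
    · simpa [hk] using h ⟨k, Finset.mem_range.mp (hsm hk)⟩
  rw [hcyl, hP m _ fun i ↦ by simp only [u]; split_ifs; exacts [ht i, .univ]]
  calc ∏ i : Fin m, μ (u i) = ∏ k ∈ Finset.range m, μ (u k) :=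
        Fin.prod_univ_eq_prod_range (fun k ↦ μ (u k)) m
    _ = ∏ k ∈ s, μ (u k) := (Finset.prod_subset hsm fun k _ hk ↦ by simp [u, hk]).symm
    _ = ∏ k ∈ s, μ (t k) := Finset.prod_congr rfl fun k hk ↦ by simp [u, hk]

end MeasureTheory.Measure

open Measure

theorem ProbabilityTheory.iIndepFun_comp_eval_infinitePi {ι : Type*} {X : ι → Type*}
    {mX : ∀ i, MeasurableSpace (X i)} (μ : (i : ι) → Measure (X i))
    [∀ i, IsProbabilityMeasure (μ i)] {β : ι → Type*} {mβ : ∀ i, MeasurableSpace (β i)}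
    (g : (i : ι) → X i → β i) :
    iIndepFun (fun i ω ↦ g i (ω i)) (infinitePi μ) := by
  rw [iIndepFun_iff_measure_inter_preimage_eq_mul]
  intro S B _
  have hinter :
      ⋂ i ∈ S, (fun ω ↦ g i (ω i)) ⁻¹' B i = (S : Set ι).pi fun i ↦ g i ⁻¹' B i := by
    ext; simp
  rw [hinter, infinitePi_pi_outer]
  exact Finset.prod_congr rfl fun i _ ↦ (infinitePi_eval_preimage μ i _).symm

theorem le_csInf_image_iff {α β : Type*} [ConditionallyCompleteLattice β] {f : α → β}
    {s : Set α} {b : β} (hs : s.Nonempty) (hf : BddBelow (f '' s)) :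
    b ≤ sInf (f '' s) ↔ s ⊆ {x | b ≤ f x} := by
  rw [le_csInf_iff hf (hs.image f)]
  exact forall_mem_image

theorem belief_inf_iid_general
    {Ω : Type*} [TopologicalSpace Ω] [MeasurableSpace Ω]
    [MeasurableSpace (NonemptyCompacts Ω)]
    (Pν : Measure (NonemptyCompacts Ω)) [IsProbabilityMeasure Pν]
    (ν : Set Ω → ℝ)
    (hrep : ∀ A : Set Ω, MeasurableSet A →
      ν A = (Pν {K : NonemptyCompacts Ω | (K : Set Ω) ⊆ A}).toReal)
    (Pinf : Measure (ℕ → NonemptyCompacts Ω))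
    (hprod : ∀ (m : ℕ) (s : Fin m → Set (NonemptyCompacts Ω)),
      (∀ i, MeasurableSet (s i)) →
      Pinf {f | ∀ i : Fin m, f i ∈ s i} = ∏ i, Pν (s i))
    (n : ℕ) (Y : Fin n → Ω → ℝ) (hYm : ∀ i, Measurable (Y i))
    (hYb : ∀ i, ∃ C, ∀ ω, |Y i ω| ≤ C) :
    iIndepFun
        (fun i (f : ℕ → NonemptyCompacts Ω) => sInf (Y i '' ((f i) : Set Ω))) Pinf ∧
    ∀ t : Fin n → ℝ,
      (Pinf {f : ℕ → NonemptyCompacts Ω |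
          ∀ i : Fin n, t i ≤ sInf (Y i '' ((f i) : Set Ω))}).toReal
        = ∏ i, ν {ω | t i ≤ Y i ω} := by
  obtain rfl := eq_infinitePi_of_fin_cylinder Pν hprod
  set Z : Fin n → (ℕ → NonemptyCompacts Ω) → ℝ := fun i f ↦ sInf (Y i '' f i)
  have hindep : iIndepFun Z (infinitePi fun _ ↦ Pν) := by
    let g : ℕ → NonemptyCompacts Ω → ℝ :=
      fun k K ↦ if h : k < n then sInf (Y ⟨k, h⟩ '' K) else 0
    have hZg : Z = fun (i : Fin n) f ↦ g i (f i) := by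
      funext i f
      simp [Z, g]
    rw [hZg]
    exact (iIndepFun_comp_eval_infinitePi _ g).precomp Fin.val_injective
  refine ⟨hindep, fun t ↦ ?_⟩
  have hZ : ∀ i, Z i ⁻¹' Ici (t i) = (fun f ↦ f i) ⁻¹'
      {K : NonemptyCompacts Ω | (K : Set Ω) ⊆ {ω | t i ≤ Y i ω}} := by
    intro i
    ext f
    obtain ⟨C, hC⟩ := hYb i
    have hbdd : BddBelow (Y i '' f i) :=
      ⟨-C, forall_mem_image.mpr fun ω _ ↦ (abs_le.mp (hC ω)).1⟩
    exact le_csInf_image_iff (f i).nonempty hbdd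
  have hset : {f | ∀ i, t i ≤ Z i f} = ⋂ i ∈ Finset.univ, Z i ⁻¹' Ici (t i) := by
    ext; simp
  rw [hset, hindep.measure_inter_preimage_eq_mul _ fun i _ ↦ measurableSet_Ici,
    ENNReal.toReal_prod]
  refine Finset.prod_congr rfl fun i _ ↦ ?_
  rw [hZ, infinitePi_eval_preimage, hrep _ (measurableSet_le measurable_const (hYm i))]

/-- Under the i.i.d. product `P_ν^∞` of the Choquet representation `P_ν`, the
variables `Z_i(K_1,K_2,...) = inf_{ω ∈ K_i} Y_i(ω)` (for `i < n`) are independent, with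
`P_ν^∞(∀ i, Z_i ≥ t_i) = ∏ i, ν(Y_i ≥ t_i)`. -/
theorem belief_inf_iid
    {Ω : Type*} [TopologicalSpace Ω] [PolishSpace Ω] [MeasurableSpace Ω] [BorelSpace Ω]
    [MeasurableSpace (NonemptyCompacts Ω)]
    (Pν : Measure (NonemptyCompacts Ω)) [IsProbabilityMeasure Pν]
    (ν : Set Ω → ℝ)
    (hrep : ∀ A : Set Ω, MeasurableSet A →
      ν A = (Pν {K : NonemptyCompacts Ω | (K : Set Ω) ⊆ A}).toReal)
    (Pinf : Measure (ℕ → NonemptyCompacts Ω)) [IsProbabilityMeasure Pinf]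
    (hprod : ∀ (m : ℕ) (s : Fin m → Set (NonemptyCompacts Ω)),
      (∀ i, MeasurableSet (s i)) →
      Pinf {f | ∀ i : Fin m, f i ∈ s i} = ∏ i, Pν (s i))
    (n : ℕ) (Y : Fin n → Ω → ℝ) (hYm : ∀ i, Measurable (Y i))
    (hYb : ∀ i, ∃ C, ∀ ω, |Y i ω| ≤ C) :
    iIndepFun
        (fun i (f : ℕ → NonemptyCompacts Ω) => sInf (Y i '' ((f i) : Set Ω))) Pinf ∧
    ∀ t : Fin n → ℝ,
      (Pinf {f : ℕ → NonemptyCompacts Ω |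
          ∀ i : Fin n, t i ≤ sInf (Y i '' ((f i) : Set Ω))}).toReal
        = ∏ i, ν {ω | t i ≤ Y i ω} :=
  belief_inf_iid_general Pν ν hrep Pinf hprod n Y hYm hYb
end

section
/- In the setting of a belief measure ν on Ω with Choquet representation P_ν, let Y_1, ..., Y_n be bounded random variables on Ω, X_i(ω_1, ω_2, ...) := Y_i(ω_i) on Ω^∞, and Z_i(K_1 × K_2 × ...) := inf_{ω ∈ K_i} Y_i(ω) on (𝒦(Ω))^∞. Let ν^∞ be the belief measure on Ω^∞ represented by the product measure P_ν^∞, i.e., ν^∞(A) = P_ν^∞({K_1 × K_2 × ... : K_1 × K_2 × ... ⊆ A}). Then for every α ∈ ℝ, ν^∞(∑_{i=1}^n X_i ≥ α) = P_ν^∞(∑_{i=1}^n Z_i ≥ α). -/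
open MeasureTheory TopologicalSpace

/-- With `ν^∞(A) = P_ν^∞ {(K_1,K_2,...) : K_1 × K_2 × ... ⊆ A}`,
`X_i(ω_1,ω_2,...) = Y_i(ω_i)` and `Z_i(K_1,K_2,...) = inf_{ω ∈ K_i} Y_i(ω)`, for every `α`,
`ν^∞(∑_{i<n} X_i ≥ α) = P_ν^∞(∑_{i<n} Z_i ≥ α)`. -/
theorem belief_sum_inf_eq
    {Ω : Type*} [TopologicalSpace Ω] [PolishSpace Ω] [MeasurableSpace Ω] [BorelSpace Ω]
    [MeasurableSpace (NonemptyCompacts Ω)]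
    (Pν : Measure (NonemptyCompacts Ω)) [IsProbabilityMeasure Pν]
    (Pinf : Measure (ℕ → NonemptyCompacts Ω)) [IsProbabilityMeasure Pinf]
    (hprod : ∀ (m : ℕ) (s : Fin m → Set (NonemptyCompacts Ω)),
      (∀ i, MeasurableSet (s i)) →
      Pinf {f | ∀ i : Fin m, f i ∈ s i} = ∏ i, Pν (s i))
    (νinf : Set (ℕ → Ω) → ℝ)
    (hrep : ∀ A : Set (ℕ → Ω), MeasurableSet A →
      νinf A = (Pinf {f : ℕ → NonemptyCompacts Ω |
        {g : ℕ → Ω | ∀ i, g i ∈ (f i : Set Ω)} ⊆ A}).toReal)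
    (n : ℕ) (Y : Fin n → Ω → ℝ) (hYm : ∀ i, Measurable (Y i))
    (hYb : ∀ i, ∃ C, ∀ ω, |Y i ω| ≤ C) :
    ∀ α : ℝ,
      νinf {g : ℕ → Ω | α ≤ ∑ i : Fin n, Y i (g i)}
        = (Pinf {f : ℕ → NonemptyCompacts Ω |
            α ≤ ∑ i : Fin n, sInf (Y i '' ((f i) : Set Ω))}).toReal := by
  intro α
  have hA : MeasurableSet {g : ℕ → Ω | α ≤ ∑ i : Fin n, Y i (g i)} := by
    have hm : Measurable fun g : ℕ → Ω => ∑ i : Fin n, Y i (g i) :=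
      Finset.measurable_sum _ fun i _ => (hYm i).comp (measurable_pi_apply _)
    exact measurableSet_le measurable_const hm
  rw [hrep _ hA]
  have hset : {f : ℕ → NonemptyCompacts Ω |
      {g : ℕ → Ω | ∀ i, g i ∈ (f i : Set Ω)} ⊆ {g : ℕ → Ω | α ≤ ∑ i : Fin n, Y i (g i)}}
      = {f : ℕ → NonemptyCompacts Ω |
          α ≤ ∑ i : Fin n, sInf (Y i '' ((f i) : Set Ω))} := by
    ext f
    simp only [Set.mem_setOf_eq, Set.setOf_subset_setOf]
    have hne : ∀ i : Fin n, (Y i '' ((f (i : ℕ) : Set Ω))).Nonempty := fun i =>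
      ((f (i : ℕ)).nonempty).image _
    have hbdd : ∀ i : Fin n, BddBelow (Y i '' ((f (i : ℕ)) : Set Ω)) := by
      intro i
      obtain ⟨C, hC⟩ := hYb i
      exact ⟨-C, fun x hx => by
        obtain ⟨ω, _, rfl⟩ := hx
        exact neg_le_of_abs_le (hC ω)⟩
    constructor
    · intro h
      have key : ∀ ε : ℝ, 0 < ε →
          α ≤ (∑ i : Fin n, sInf (Y i '' ((f (i : ℕ)) : Set Ω))) + ε := by
        intro ε hε
        have hε' : 0 < ε / (n + 1) := by positivity
        have hpick : ∀ i : Fin n, ∃ ω ∈ ((f (i : ℕ)) : Set Ω),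
            Y i ω < sInf (Y i '' ((f (i : ℕ)) : Set Ω)) + ε / (n + 1) := by
          intro i
          obtain ⟨x, ⟨ω, hω, rfl⟩, hlt⟩ := exists_lt_of_csInf_lt (hne i)
            (lt_add_of_pos_right _ hε')
          exact ⟨ω, hω, hlt⟩
        choose w hw hw' using hpick
        set g : ℕ → Ω := fun k => if h : k < n then w ⟨k, h⟩ else ((f k).nonempty).some with hg_def
        have hg : ∀ k, g k ∈ (f k : Set Ω) := by
          intro k
          by_cases h : k < n
          · simpa [hg_def, h] using hw ⟨k, h⟩
          · simpa [hg_def, h] using ((f k).nonempty).some_mem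
        have h1 : α ≤ ∑ i : Fin n, Y i (g (i : ℕ)) := h g hg
        have h2 : ∑ i : Fin n, Y i (g (i : ℕ)) ≤
            ∑ i : Fin n, (sInf (Y i '' ((f (i : ℕ)) : Set Ω)) + ε / (n + 1)) := by
          apply Finset.sum_le_sum
          intro i _
          have hgi : g (i : ℕ) = w i := by simp [hg_def, i.isLt]
          rw [hgi]
          exact (hw' i).le
        have h3 : ∑ i : Fin n, (sInf (Y i '' ((f (i : ℕ)) : Set Ω)) + ε / (n + 1)) =
            (∑ i : Fin n, sInf (Y i '' ((f (i : ℕ)) : Set Ω))) + n * (ε / (n + 1)) := by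
          rw [Finset.sum_add_distrib, Finset.sum_const, Finset.card_univ, Fintype.card_fin]
          push_cast
          ring
        have h4 : (n : ℝ) * (ε / (n + 1)) ≤ ε := by
          rw [mul_div_assoc']
          rw [div_le_iff₀ (by positivity)]
          nlinarith [Nat.cast_nonneg (α := ℝ) n]
        linarith
      exact le_of_forall_pos_le_add key
    · intro h g hg
      have : ∑ i : Fin n, sInf (Y i '' ((f (i : ℕ)) : Set Ω)) ≤ ∑ i : Fin n, Y i (g (i : ℕ)) :=
        Finset.sum_le_sum fun i _ => csInf_le (hbdd i) ⟨g (i : ℕ), hg (i : ℕ), rfl⟩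
      linarith

  rw [hset]
end

section
/- In the setting of a belief measure ν with Choquet representation P_ν, let Y_i be bounded, X_i(ω_1, ω_2, ...) := Y_i(ω_i), Z_i := inf over the i-th compact coordinate of Y_i, and Z̄_i := sup over the i-th compact coordinate of Y_i. Then for all real α_1 ≤ α_2 and all n, ν^∞(α_1 ≤ ∑_{i=1}^n X_i ≤ α_2) = P_ν^∞(α_1 ≤ ∑_{i=1}^n Z_i and ∑_{i=1}^n Z̄_i ≤ α_2). -/
open MeasureTheory TopologicalSpace

/-- For all `α₁ ≤ α₂`,
`ν^∞(α₁ ≤ ∑ X_i ≤ α₂) = P_ν^∞(α₁ ≤ ∑ Z_i ∧ ∑ Z̄_i ≤ α₂)`, where `Z_i` (resp. `Z̄_i`)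
is the inf (resp. sup) of `Y_i` over the `i`-th compact coordinate. -/
theorem belief_two_sided_eq
    {Ω : Type*} [TopologicalSpace Ω] [PolishSpace Ω] [MeasurableSpace Ω] [BorelSpace Ω]
    [MeasurableSpace (NonemptyCompacts Ω)]
    (Pν : Measure (NonemptyCompacts Ω)) [IsProbabilityMeasure Pν]
    (Pinf : Measure (ℕ → NonemptyCompacts Ω)) [IsProbabilityMeasure Pinf]
    (hprod : ∀ (m : ℕ) (s : Fin m → Set (NonemptyCompacts Ω)),
      (∀ i, MeasurableSet (s i)) →
      Pinf {f | ∀ i : Fin m, f i ∈ s i} = ∏ i, Pν (s i))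
    (νinf : Set (ℕ → Ω) → ℝ)
    (hrep : ∀ A : Set (ℕ → Ω), MeasurableSet A →
      νinf A = (Pinf {f : ℕ → NonemptyCompacts Ω |
        {g : ℕ → Ω | ∀ i, g i ∈ (f i : Set Ω)} ⊆ A}).toReal)
    (n : ℕ) (Y : Fin n → Ω → ℝ) (hYm : ∀ i, Measurable (Y i))
    (hYb : ∀ i, ∃ C, ∀ ω, |Y i ω| ≤ C) :
    ∀ α₁ α₂ : ℝ, α₁ ≤ α₂ →
      νinf {g : ℕ → Ω | α₁ ≤ ∑ i : Fin n, Y i (g i) ∧ ∑ i : Fin n, Y i (g i) ≤ α₂}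
        = (Pinf {f : ℕ → NonemptyCompacts Ω |
            α₁ ≤ ∑ i : Fin n, sInf (Y i '' ((f i) : Set Ω)) ∧
            ∑ i : Fin n, sSup (Y i '' ((f i) : Set Ω)) ≤ α₂}).toReal := by
  intro α₁ α₂ _
  have hF : Measurable fun g : ℕ → Ω => ∑ i : Fin n, Y i (g i) :=
    Finset.measurable_sum _ fun i _ => (hYm i).comp (measurable_pi_apply (i : ℕ))
  have hA : MeasurableSet {g : ℕ → Ω |
      α₁ ≤ ∑ i : Fin n, Y i (g i) ∧ ∑ i : Fin n, Y i (g i) ≤ α₂} :=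
    (measurableSet_le measurable_const hF).inter (measurableSet_le hF measurable_const)
  rw [hrep _ hA]
  have hset : {f : ℕ → NonemptyCompacts Ω |
      {g : ℕ → Ω | ∀ i, g i ∈ (f i : Set Ω)} ⊆
        {g : ℕ → Ω | α₁ ≤ ∑ i : Fin n, Y i (g i) ∧ ∑ i : Fin n, Y i (g i) ≤ α₂}}
      = {f : ℕ → NonemptyCompacts Ω |
          α₁ ≤ ∑ i : Fin n, sInf (Y i '' ((f i) : Set Ω)) ∧
          ∑ i : Fin n, sSup (Y i '' ((f i) : Set Ω)) ≤ α₂} := by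
    ext f
    simp only [Set.mem_setOf_eq, Set.setOf_subset_setOf]
    -- per-coordinate facts
    have hne : ∀ i : Fin n, (Y i '' ((f i) : Set Ω)).Nonempty :=
      fun i => (f i).nonempty.image _
    have hbdd : ∀ i : Fin n, BddBelow (Y i '' ((f i) : Set Ω)) ∧
        BddAbove (Y i '' ((f i) : Set Ω)) := by
      intro i
      obtain ⟨C, hC⟩ := hYb i
      constructor
      · exact ⟨-C, fun y ⟨x, _, hx⟩ => hx ▸ neg_le_of_abs_le (hC x)⟩
      · exact ⟨C, fun y ⟨x, _, hx⟩ => hx ▸ le_of_abs_le (hC x)⟩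
    constructor
    · -- subset condition implies bounds on sums of inf/sup
      intro hsub
      constructor
      · -- α₁ ≤ ∑ sInf
        refine le_of_forall_pos_le_add ?_
        intro ε hε
        have hδ : (0:ℝ) < ε / (n + 1) := by positivity
        have hchoice : ∀ i : Fin n, ∃ x : Ω, x ∈ ((f i) : Set Ω) ∧
            Y i x < sInf (Y i '' ((f i) : Set Ω)) + ε / (n + 1) := by
          intro i
          obtain ⟨y, ⟨x, hx, rfl⟩, hy⟩ := exists_lt_of_csInf_lt (hne i)
            (lt_add_of_pos_right _ hδ)
          exact ⟨x, hx, hy⟩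
        choose x hx hxlt using hchoice
        set g : ℕ → Ω := fun j => if h : j < n then x ⟨j, h⟩ else ((f j).nonempty).some
        have hg : ∀ j, g j ∈ ((f j) : Set Ω) := by
          intro j
          by_cases h : j < n
          · simpa [g, h] using hx ⟨j, h⟩
          · simpa [g, h] using ((f j).nonempty).some_mem
        have hgA := hsub g hg
        have hge : ∀ i : Fin n, g i = x i := by
          intro i; simp [g, i.isLt]
        have hsum : (∑ i : Fin n, Y i (g i)) <
            (∑ i : Fin n, sInf (Y i '' ((f i) : Set Ω))) + ε := by
          calc (∑ i : Fin n, Y i (g i))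
              ≤ ∑ i : Fin n, (sInf (Y i '' ((f i) : Set Ω)) + ε / (n + 1)) := by
                apply Finset.sum_le_sum
                intro i _
                rw [hge i]
                exact (hxlt i).le
            _ = (∑ i : Fin n, sInf (Y i '' ((f i) : Set Ω))) + n * (ε / (n + 1)) := by
                rw [Finset.sum_add_distrib]
                simp [Finset.card_univ]
            _ < _ := by
                have : (n : ℝ) * (ε / (n + 1)) < ε := by
                  rw [mul_div_assoc']
                  rw [div_lt_iff₀ (by positivity)]
                  nlinarith
                linarith
        linarith [hgA.1]
      · -- ∑ sSup ≤ α₂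
        refine le_of_forall_pos_le_add ?_
        intro ε hε
        have hδ : (0:ℝ) < ε / (n + 1) := by positivity
        have hchoice : ∀ i : Fin n, ∃ x : Ω, x ∈ ((f i) : Set Ω) ∧
            sSup (Y i '' ((f i) : Set Ω)) - ε / (n + 1) < Y i x := by
          intro i
          obtain ⟨y, ⟨x, hx, rfl⟩, hy⟩ := exists_lt_of_lt_csSup (hne i)
            (sub_lt_self _ hδ)
          exact ⟨x, hx, hy⟩
        choose x hx hxlt using hchoice
        set g : ℕ → Ω := fun j => if h : j < n then x ⟨j, h⟩ else ((f j).nonempty).some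
        have hg : ∀ j, g j ∈ ((f j) : Set Ω) := by
          intro j
          by_cases h : j < n
          · simpa [g, h] using hx ⟨j, h⟩
          · simpa [g, h] using ((f j).nonempty).some_mem
        have hgA := hsub g hg
        have hge : ∀ i : Fin n, g i = x i := by
          intro i; simp [g, i.isLt]
        have hsum : (∑ i : Fin n, sSup (Y i '' ((f i) : Set Ω))) - ε <
            (∑ i : Fin n, Y i (g i)) := by
          calc (∑ i : Fin n, sSup (Y i '' ((f i) : Set Ω))) - ε
              < (∑ i : Fin n, sSup (Y i '' ((f i) : Set Ω))) - n * (ε / (n + 1)) := by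
                have : (n : ℝ) * (ε / (n + 1)) < ε := by
                  rw [mul_div_assoc']
                  rw [div_lt_iff₀ (by positivity)]
                  nlinarith
                linarith
            _ = ∑ i : Fin n, (sSup (Y i '' ((f i) : Set Ω)) - ε / (n + 1)) := by
                rw [Finset.sum_sub_distrib]
                simp [Finset.card_univ]
            _ ≤ ∑ i : Fin n, Y i (g i) := by
                apply Finset.sum_le_sum
                intro i _
                rw [hge i]
                exact (hxlt i).le
        linarith [hgA.2]
    · -- bounds on sums of inf/sup imply subset condition
      rintro ⟨h₁, h₂⟩ g hg
      constructor
      · refine h₁.trans (Finset.sum_le_sum fun i _ => ?_)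
        exact csInf_le (hbdd i).1 ⟨g i, hg i, rfl⟩
      · refine (Finset.sum_le_sum fun i _ => ?_).trans h₂
        exact le_csSup (hbdd i).2 ⟨g i, hg i, rfl⟩
  rw [hset]
end
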